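/- arXiv:2402.16862 — 3 statements merged into one kernel-verified Lean document; each statement's English description precedes it below -/
import Mathlib

section
/- A conditional strategy P(X,Y|A,B) factorizes as P(X|A)·P(Y|B) if and only if the following three conditional independence conditions hold: X and Y are independent given (A,B); X is independent of B given A; and Y is independent of A given B. -/
open Finset
open scoped Classical

open scoped Classical in
noncomputable def Pr {Ω : Type*} [Fintype Ω] (p : Ω → ℝ) (E : Ω → Prop) : ℝ :=
  ∑ ω, if E ω then p ω else 0

lemma Pr_congr {Ω : Type*} [Fintype Ω] (p : Ω → ℝ) {E F : Ω → Prop}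
    (h : ∀ ω, E ω ↔ F ω) : Pr p E = Pr p F := by
  unfold Pr
  exact Finset.sum_congr rfl fun ω _ => if_congr (h ω) rfl rfl

lemma Pr_mono {Ω : Type*} [Fintype Ω] {p : Ω → ℝ} (hp : ∀ ω, 0 ≤ p ω)
    {E F : Ω → Prop} (h : ∀ ω, E ω → F ω) : Pr p E ≤ Pr p F := by
  unfold Pr
  apply Finset.sum_le_sum
  intro ω _
  by_cases hE : E ω
  · simp [hE, h ω hE]
  · simp only [hE, if_false]
    split
    · exact hp ω
    · exact le_refl 0

lemma Pr_fiber {Ω 𝒴 : Type*} [Fintype Ω] (p : Ω → ℝ) (Y : Ω → 𝒴) (E : Ω → Prop) :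
    ∑ y ∈ Finset.univ.image Y, Pr p (fun ω => Y ω = y ∧ E ω) = Pr p E := by
  classical
  unfold Pr
  rw [Finset.sum_comm]
  refine Finset.sum_congr rfl fun ω _ => ?_
  rw [Finset.sum_eq_single (Y ω)]
  · simp
  · intro y _ hy
    simp [Ne.symm hy]
  · intro h
    exact absurd (Finset.mem_image_of_mem Y (Finset.mem_univ ω)) h

/-- A conditional strategy `P(X,Y|A,B)` factorizes as `P(X|A)·P(Y|B)` iff
`X ⟂ Y | (A,B)`, `X ⟂ B | A` and `Y ⟂ A | B`. -/
theorem statement0 {Ω 𝒜 ℬ 𝒳 𝒴 : Type} [Fintype Ω]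
    (p : Ω → ℝ) (hp0 : ∀ ω, 0 ≤ p ω) (hp1 : ∑ ω, p ω = 1)
    (A : Ω → 𝒜) (B : Ω → ℬ) (X : Ω → 𝒳) (Y : Ω → 𝒴)
    (hAB : ∀ a b, 0 < Pr p (fun ω => A ω = a ∧ B ω = b)) :
    ((∀ (x : 𝒳) (y : 𝒴) (a : 𝒜) (b : ℬ),
        Pr p (fun ω => X ω = x ∧ Y ω = y ∧ A ω = a ∧ B ω = b) /
            Pr p (fun ω => A ω = a ∧ B ω = b) =
          Pr p (fun ω => X ω = x ∧ A ω = a) / Pr p (fun ω => A ω = a) *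
            (Pr p (fun ω => Y ω = y ∧ B ω = b) / Pr p (fun ω => B ω = b)))
      ↔
      ((∀ (x : 𝒳) (y : 𝒴) (a : 𝒜) (b : ℬ),
          Pr p (fun ω => X ω = x ∧ Y ω = y ∧ A ω = a ∧ B ω = b) /
              Pr p (fun ω => A ω = a ∧ B ω = b) =
            Pr p (fun ω => X ω = x ∧ A ω = a ∧ B ω = b) /
                Pr p (fun ω => A ω = a ∧ B ω = b) *
              (Pr p (fun ω => Y ω = y ∧ A ω = a ∧ B ω = b) /
                Pr p (fun ω => A ω = a ∧ B ω = b)))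
        ∧ (∀ (x : 𝒳) (a : 𝒜) (b : ℬ),
            Pr p (fun ω => X ω = x ∧ A ω = a ∧ B ω = b) /
                Pr p (fun ω => A ω = a ∧ B ω = b) =
              Pr p (fun ω => X ω = x ∧ A ω = a) / Pr p (fun ω => A ω = a))
        ∧ (∀ (y : 𝒴) (a : 𝒜) (b : ℬ),
            Pr p (fun ω => Y ω = y ∧ A ω = a ∧ B ω = b) /
                Pr p (fun ω => A ω = a ∧ B ω = b) =
              Pr p (fun ω => Y ω = y ∧ B ω = b) / Pr p (fun ω => B ω = b)))) := by
  constructor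
  · intro h
    have hPa : ∀ (a : 𝒜) (b : ℬ), 0 < Pr p (fun ω => A ω = a) := fun a b =>
      lt_of_lt_of_le (hAB a b) (Pr_mono hp0 fun ω hω => hω.1)
    have hPb : ∀ (a : 𝒜) (b : ℬ), 0 < Pr p (fun ω => B ω = b) := fun a b =>
      lt_of_lt_of_le (hAB a b) (Pr_mono hp0 fun ω hω => hω.2)
    have h2 : ∀ (x : 𝒳) (a : 𝒜) (b : ℬ),
        Pr p (fun ω => X ω = x ∧ A ω = a ∧ B ω = b) /
            Pr p (fun ω => A ω = a ∧ B ω = b) =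
          Pr p (fun ω => X ω = x ∧ A ω = a) / Pr p (fun ω => A ω = a) := by
      intro x a b
      have sum1 : ∑ y ∈ Finset.univ.image Y,
          Pr p (fun ω => X ω = x ∧ Y ω = y ∧ A ω = a ∧ B ω = b)
          = Pr p (fun ω => X ω = x ∧ A ω = a ∧ B ω = b) := by
        rw [← Pr_fiber p Y (fun ω => X ω = x ∧ A ω = a ∧ B ω = b)]
        exact Finset.sum_congr rfl fun y _ => Pr_congr p (fun ω => by tauto)
      have sum2 : ∑ y ∈ Finset.univ.image Y, Pr p (fun ω => Y ω = y ∧ B ω = b)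
          = Pr p (fun ω => B ω = b) := Pr_fiber p Y _
      calc Pr p (fun ω => X ω = x ∧ A ω = a ∧ B ω = b) /
              Pr p (fun ω => A ω = a ∧ B ω = b)
          = ∑ y ∈ Finset.univ.image Y,
              Pr p (fun ω => X ω = x ∧ Y ω = y ∧ A ω = a ∧ B ω = b) /
                Pr p (fun ω => A ω = a ∧ B ω = b) := by
            rw [← Finset.sum_div, sum1]
        _ = ∑ y ∈ Finset.univ.image Y,
              Pr p (fun ω => X ω = x ∧ A ω = a) / Pr p (fun ω => A ω = a) *
                (Pr p (fun ω => Y ω = y ∧ B ω = b) / Pr p (fun ω => B ω = b)) :=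
            Finset.sum_congr rfl fun y _ => h x y a b
        _ = Pr p (fun ω => X ω = x ∧ A ω = a) / Pr p (fun ω => A ω = a) *
              ((∑ y ∈ Finset.univ.image Y, Pr p (fun ω => Y ω = y ∧ B ω = b)) /
                Pr p (fun ω => B ω = b)) := by
            rw [← Finset.mul_sum, ← Finset.sum_div]
        _ = Pr p (fun ω => X ω = x ∧ A ω = a) / Pr p (fun ω => A ω = a) := by
            rw [sum2, div_self (hPb a b).ne', mul_one]
    have h3 : ∀ (y : 𝒴) (a : 𝒜) (b : ℬ),
        Pr p (fun ω => Y ω = y ∧ A ω = a ∧ B ω = b) /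
            Pr p (fun ω => A ω = a ∧ B ω = b) =
          Pr p (fun ω => Y ω = y ∧ B ω = b) / Pr p (fun ω => B ω = b) := by
      intro y a b
      have sum1 : ∑ x ∈ Finset.univ.image X,
          Pr p (fun ω => X ω = x ∧ Y ω = y ∧ A ω = a ∧ B ω = b)
          = Pr p (fun ω => Y ω = y ∧ A ω = a ∧ B ω = b) := by
        rw [← Pr_fiber p X (fun ω => Y ω = y ∧ A ω = a ∧ B ω = b)]
      have sum2 : ∑ x ∈ Finset.univ.image X, Pr p (fun ω => X ω = x ∧ A ω = a)
          = Pr p (fun ω => A ω = a) := Pr_fiber p X _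
      calc Pr p (fun ω => Y ω = y ∧ A ω = a ∧ B ω = b) /
              Pr p (fun ω => A ω = a ∧ B ω = b)
          = ∑ x ∈ Finset.univ.image X,
              Pr p (fun ω => X ω = x ∧ Y ω = y ∧ A ω = a ∧ B ω = b) /
                Pr p (fun ω => A ω = a ∧ B ω = b) := by
            rw [← Finset.sum_div, sum1]
        _ = ∑ x ∈ Finset.univ.image X,
              Pr p (fun ω => X ω = x ∧ A ω = a) / Pr p (fun ω => A ω = a) *
                (Pr p (fun ω => Y ω = y ∧ B ω = b) / Pr p (fun ω => B ω = b)) :=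
            Finset.sum_congr rfl fun x _ => h x y a b
        _ = (∑ x ∈ Finset.univ.image X, Pr p (fun ω => X ω = x ∧ A ω = a)) /
              Pr p (fun ω => A ω = a) *
                (Pr p (fun ω => Y ω = y ∧ B ω = b) / Pr p (fun ω => B ω = b)) := by
            rw [← Finset.sum_mul, ← Finset.sum_div]
        _ = Pr p (fun ω => Y ω = y ∧ B ω = b) / Pr p (fun ω => B ω = b) := by
            rw [sum2, div_self (hPa a b).ne', one_mul]
    refine ⟨fun x y a b => ?_, h2, h3⟩
    rw [h2 x a b, h3 y a b, h x y a b]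
  · rintro ⟨h1, h2, h3⟩ x y a b
    rw [h1 x y a b, h2 x a b, h3 y a b]
end

section
/- If a binary strategy P(x,y|a,b) is local, i.e., P(x,y|a,b) = Σ_w μ(w)·f(x|a,w)·g(y|b,w) for some finite probability space (𝒲,μ) and kernels f, g, then it satisfies the CHSH inequality: ⟨(-1)^X(-1)^Y⟩_{0,0} + ⟨(-1)^X(-1)^Y⟩_{0,1} + ⟨(-1)^X(-1)^Y⟩_{1,0} − ⟨(-1)^X(-1)^Y⟩_{1,1} ≤ 2, where ⟨(-1)^X(-1)^Y⟩_{a,b} := Σ_{x,y∈{0,1}} P(x,y|a,b)·(-1)^x·(-1)^y. -/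
/-- The CHSH correlator `⟨(-1)^X (-1)^Y⟩_{a,b}` of a binary strategy. -/
noncomputable def corr (P : Fin 2 → Fin 2 → Fin 2 → Fin 2 → ℝ) (a b : Fin 2) : ℝ :=
  ∑ x : Fin 2, ∑ y : Fin 2, P a b x y * (-1) ^ (x : ℕ) * (-1) ^ (y : ℕ)

/-- Pointwise CHSH bound for numbers in `[-1, 1]`. -/
lemma chsh_pt (a0 a1 b0 b1 : ℝ) (h1 : -1 ≤ a0) (h2 : a0 ≤ 1) (h3 : -1 ≤ a1) (h4 : a1 ≤ 1)
    (h5 : -1 ≤ b0) (h6 : b0 ≤ 1) (h7 : -1 ≤ b1) (h8 : b1 ≤ 1) :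
    a0 * b0 + a0 * b1 + a1 * b0 - a1 * b1 ≤ 2 := by
  have e1 : a0 * (b0 + b1) ≤ |b0 + b1| := by
    calc a0 * (b0 + b1) ≤ |a0 * (b0 + b1)| := le_abs_self _
      _ = |a0| * |b0 + b1| := abs_mul _ _
      _ ≤ 1 * |b0 + b1| := by
          apply mul_le_mul_of_nonneg_right _ (abs_nonneg _)
          rw [abs_le]; exact ⟨h1, h2⟩
      _ = |b0 + b1| := one_mul _
  have e2 : a1 * (b0 - b1) ≤ |b0 - b1| := by
    calc a1 * (b0 - b1) ≤ |a1 * (b0 - b1)| := le_abs_self _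
      _ = |a1| * |b0 - b1| := abs_mul _ _
      _ ≤ 1 * |b0 - b1| := by
          apply mul_le_mul_of_nonneg_right _ (abs_nonneg _)
          rw [abs_le]; exact ⟨h3, h4⟩
      _ = |b0 - b1| := one_mul _
  have e3 : |b0 + b1| + |b0 - b1| ≤ 2 := by
    rcases abs_cases (b0 + b1) with ⟨hc1, _⟩ | ⟨hc1, _⟩ <;>
      rcases abs_cases (b0 - b1) with ⟨hc2, _⟩ | ⟨hc2, _⟩ <;> linarith
  linarith [e1, e2, e3]

/-- Every local binary strategy satisfies the CHSH inequality. -/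
theorem statement5 {𝒲 : Type} [Fintype 𝒲]
    (P : Fin 2 → Fin 2 → Fin 2 → Fin 2 → ℝ)
    (μ : 𝒲 → ℝ) (f : Fin 2 → 𝒲 → Fin 2 → ℝ) (g : Fin 2 → 𝒲 → Fin 2 → ℝ)
    (hμ0 : ∀ w, 0 ≤ μ w) (hμ1 : ∑ w, μ w = 1)
    (hf0 : ∀ a w x, 0 ≤ f a w x) (hf1 : ∀ a w, ∑ x, f a w x = 1)
    (hg0 : ∀ b w y, 0 ≤ g b w y) (hg1 : ∀ b w, ∑ y, g b w y = 1)
    (hfac : ∀ a b x y, P a b x y = ∑ w, μ w * f a w x * g b w y) :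
    corr P 0 0 + corr P 0 1 + corr P 1 0 - corr P 1 1 ≤ 2 := by
  have hcorr : ∀ a b, corr P a b
      = ∑ w, μ w * ((f a w 0 - f a w 1) * (g b w 0 - g b w 1)) := by
    intro a b
    calc corr P a b
        = (∑ w, μ w * f a w 0 * g b w 0) - (∑ w, μ w * f a w 0 * g b w 1)
          - (∑ w, μ w * f a w 1 * g b w 0) + (∑ w, μ w * f a w 1 * g b w 1) := by
          simp [corr, Fin.sum_univ_two, hfac]; ring
      _ = ∑ w, μ w * ((f a w 0 - f a w 1) * (g b w 0 - g b w 1)) := by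
          rw [← Finset.sum_sub_distrib, ← Finset.sum_sub_distrib, ← Finset.sum_add_distrib]
          exact Finset.sum_congr rfl fun w _ => by ring
  rw [hcorr, hcorr, hcorr, hcorr]
  rw [← Finset.sum_add_distrib, ← Finset.sum_add_distrib, ← Finset.sum_sub_distrib]
  calc (∑ w, (μ w * ((f 0 w 0 - f 0 w 1) * (g 0 w 0 - g 0 w 1))
          + μ w * ((f 0 w 0 - f 0 w 1) * (g 1 w 0 - g 1 w 1))
          + μ w * ((f 1 w 0 - f 1 w 1) * (g 0 w 0 - g 0 w 1))
          - μ w * ((f 1 w 0 - f 1 w 1) * (g 1 w 0 - g 1 w 1))))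
      ≤ ∑ w, μ w * 2 := by
        apply Finset.sum_le_sum
        intro w _
        have hfs0 := hf1 0 w; have hfs1 := hf1 1 w
        have hgs0 := hg1 0 w; have hgs1 := hg1 1 w
        simp only [Fin.sum_univ_two] at hfs0 hfs1 hgs0 hgs1
        have key := chsh_pt (f 0 w 0 - f 0 w 1) (f 1 w 0 - f 1 w 1)
          (g 0 w 0 - g 0 w 1) (g 1 w 0 - g 1 w 1)
          (by linarith [hf0 0 w 0, hf0 0 w 1]) (by linarith [hf0 0 w 0, hf0 0 w 1])
          (by linarith [hf0 1 w 0, hf0 1 w 1]) (by linarith [hf0 1 w 0, hf0 1 w 1])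
          (by linarith [hg0 0 w 0, hg0 0 w 1]) (by linarith [hg0 0 w 0, hg0 0 w 1])
          (by linarith [hg0 1 w 0, hg0 1 w 1]) (by linarith [hg0 1 w 0, hg0 1 w 1])
        nlinarith [hμ0 w, key]
      _ = 2 := by rw [← Finset.sum_mul, hμ1, one_mul]
end

section
/- There exists a no-signaling binary strategy P(x,y|a,b) that admits an active-common-randomness factorization P(x,y|a,b) = Σ_w P(w|a,b)·f(x|a,w)·g(y|b,w) with P(w|a,b) genuinely depending on (a,b), but admits no passive factorization P(x,y|a,b) = Σ_w μ(w)·f(x|a,w)·g(y|b,w) with μ independent of (a,b). -/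
/-!
The strategy exhibits Hardy's paradox. In a passive model every hidden value `w` of positive
weight fixes Alice's and Bob's response distributions, and the three zeros
`P(1,0|0,1) = P(1,1|1,1) = P(0,1|1,0) = 0` force, for such a `w`, the chain
"Alice outputs 1 on input 0 ⇒ Bob outputs 1 on input 1 ⇒ Alice outputs 0 on input 1 ⇒
Bob does not output 1 on input 0". Hence `P(1,1|0,0) = 0`, whereas it equals `1/6`.
An active model escapes this because the weights themselves may change with `(a,b)`.
-/

open Finset

section Hardy

theorem hardy_mul_eq_zero {m : ℝ} {p p' q q' : Fin 2 → ℝ}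
    (hp' : p' 0 + p' 1 = 1) (hq' : q' 0 + q' 1 = 1)
    (h₁ : m * p 1 * q' 0 = 0) (h₂ : m * p' 1 * q' 1 = 0) (h₃ : m * p' 0 * q 1 = 0) :
    m * p 1 * q 1 = 0 := by
  by_contra h
  obtain ⟨⟨hm, hp⟩, hq⟩ : (m ≠ 0 ∧ p 1 ≠ 0) ∧ q 1 ≠ 0 := by simpa only [mul_ne_zero_iff] using h
  have hq'₀ : q' 0 = 0 := by simpa [hm, hp] using h₁
  have hp'₁ : p' 1 = 0 := by simpa [hm, show q' 1 = 1 by linarith] using h₂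
  have hp'₀ : p' 0 = 1 := by linarith
  simp [hm, hq, hp'₀] at h₃

variable {α β ι : Type*} [Fintype ι] {μ : ι → ℝ}
  {f : α → ι → Fin 2 → ℝ} {g : β → ι → Fin 2 → ℝ}

theorem hardy_sum_eq_zero (hμ : ∀ w, 0 ≤ μ w)
    (hf₀ : ∀ a w x, 0 ≤ f a w x) (hf₁ : ∀ a w, ∑ x, f a w x = 1)
    (hg₀ : ∀ b w y, 0 ≤ g b w y) (hg₁ : ∀ b w, ∑ y, g b w y = 1) {a a' : α} {b b' : β}
    (h₁ : ∑ w, μ w * f a w 1 * g b' w 0 = 0) (h₂ : ∑ w, μ w * f a' w 1 * g b' w 1 = 0)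
    (h₃ : ∑ w, μ w * f a' w 0 * g b w 1 = 0) :
    ∑ w, μ w * f a w 1 * g b w 1 = 0 := by
  have hterm : ∀ a b x y w, 0 ≤ μ w * f a w x * g b w y := fun a b x y w =>
    mul_nonneg (mul_nonneg (hμ w) (hf₀ a w x)) (hg₀ b w y)
  simp only [sum_eq_zero_iff_of_nonneg fun w _ => hterm _ _ _ _ w, mem_univ,
    forall_const] at h₁ h₂ h₃ ⊢
  intro w
  exact hardy_mul_eq_zero (by simpa [Fin.sum_univ_two] using hf₁ a' w)
    (by simpa [Fin.sum_univ_two] using hg₁ b' w) (h₁ w) (h₂ w) (h₃ w)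

end Hardy

noncomputable def hardyStrategy : Fin 2 → Fin 2 → Fin 2 → Fin 2 → ℝ :=
  ![![![![1/2, 0], ![1/3, 1/6]], ![![1/2, 0], ![0, 1/2]]],
    ![![![1/2, 0], ![1/3, 1/6]], ![![0, 1/2], ![1/2, 0]]]]

/- In the active model `w : Fin 4` carries Alice's output `x = w / 2`; for each `(a,b)` the
kernel puts weight `1/2` on `x = 0` and on `x = 1`, choosing which of Bob's responses goes with it. -/
noncomputable def hardyKernel : Fin 2 → Fin 2 → Fin 4 → ℝ :=
  ![![![1/2, 0, 0, 1/2], ![1/2, 0, 0, 1/2]],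
    ![![1/2, 0, 0, 1/2], ![0, 1/2, 1/2, 0]]]

noncomputable def hardyAlice : Fin 2 → Fin 4 → Fin 2 → ℝ :=
  fun _ => ![![1, 0], ![1, 0], ![0, 1], ![0, 1]]

noncomputable def hardyBob : Fin 2 → Fin 4 → Fin 2 → ℝ :=
  ![![![1, 0], ![2/3, 1/3], ![1, 0], ![2/3, 1/3]],
    ![![1, 0], ![0, 1], ![1, 0], ![0, 1]]]

theorem hardyStrategy_nonneg (a b x y : Fin 2) : 0 ≤ hardyStrategy a b x y := by
  fin_cases a <;> fin_cases b <;> fin_cases x <;> fin_cases y <;> norm_num [hardyStrategy]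

theorem hardyStrategy_sum (a b : Fin 2) : ∑ x, ∑ y, hardyStrategy a b x y = 1 := by
  fin_cases a <;> fin_cases b <;> norm_num [hardyStrategy, Fin.sum_univ_two]

theorem hardyStrategy_marginal_alice (a x b b' : Fin 2) :
    ∑ y, hardyStrategy a b x y = ∑ y, hardyStrategy a b' x y := by
  fin_cases a <;> fin_cases x <;> fin_cases b <;> fin_cases b' <;>
    norm_num [hardyStrategy, Fin.sum_univ_two]

theorem hardyStrategy_marginal_bob (b y a a' : Fin 2) :
    ∑ x, hardyStrategy a b x y = ∑ x, hardyStrategy a' b x y := by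
  fin_cases b <;> fin_cases y <;> fin_cases a <;> fin_cases a' <;>
    norm_num [hardyStrategy, Fin.sum_univ_two]

theorem hardyStrategy_eq_sum_hardyKernel (a b x y : Fin 2) :
    hardyStrategy a b x y = ∑ w, hardyKernel a b w * hardyAlice a w x * hardyBob b w y := by
  fin_cases a <;> fin_cases b <;> fin_cases x <;> fin_cases y <;>
    norm_num [hardyStrategy, hardyKernel, hardyAlice, hardyBob, Fin.sum_univ_succ]

theorem hardyStrategy_active_factorization :
    ∃ (n : ℕ) (ν : Fin 2 → Fin 2 → Fin n → ℝ)
      (f : Fin 2 → Fin n → Fin 2 → ℝ) (g : Fin 2 → Fin n → Fin 2 → ℝ),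
      (∀ a b w, 0 ≤ ν a b w) ∧ (∀ a b : Fin 2, ∑ w, ν a b w = 1) ∧
      (∀ a w x, 0 ≤ f a w x) ∧ (∀ a w, ∑ x, f a w x = 1) ∧
      (∀ b w y, 0 ≤ g b w y) ∧ (∀ b w, ∑ y, g b w y = 1) ∧
      (∀ a b x y, hardyStrategy a b x y = ∑ w, ν a b w * f a w x * g b w y) ∧
      (∃ a b a' b' w, ν a b w ≠ ν a' b' w) := by
  refine ⟨4, hardyKernel, hardyAlice, hardyBob, ?_, ?_, ?_, ?_, ?_, ?_,
    hardyStrategy_eq_sum_hardyKernel, 0, 0, 1, 1, 0, by norm_num [hardyKernel]⟩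
  · intro a b w
    fin_cases a <;> fin_cases b <;> fin_cases w <;> norm_num [hardyKernel]
  · intro a b
    fin_cases a <;> fin_cases b <;> norm_num [hardyKernel, Fin.sum_univ_succ]
  · intro a w x
    fin_cases w <;> fin_cases x <;> norm_num [hardyAlice]
  · intro a w
    fin_cases w <;> norm_num [hardyAlice, Fin.sum_univ_two]
  · intro b w y
    fin_cases b <;> fin_cases w <;> fin_cases y <;> norm_num [hardyBob]
  · intro b w
    fin_cases b <;> fin_cases w <;> norm_num [hardyBob, Fin.sum_univ_two]

theorem hardyStrategy_not_passive_factorization :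
    ¬ ∃ (n : ℕ) (μ : Fin n → ℝ)
      (f : Fin 2 → Fin n → Fin 2 → ℝ) (g : Fin 2 → Fin n → Fin 2 → ℝ),
      (∀ w, 0 ≤ μ w) ∧ (∑ w, μ w = 1) ∧
      (∀ a w x, 0 ≤ f a w x) ∧ (∀ a w, ∑ x, f a w x = 1) ∧
      (∀ b w y, 0 ≤ g b w y) ∧ (∀ b w, ∑ y, g b w y = 1) ∧
      (∀ a b x y, hardyStrategy a b x y = ∑ w, μ w * f a w x * g b w y) := by
  rintro ⟨n, μ, f, g, hμ, -, hf₀, hf₁, hg₀, hg₁, hP⟩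
  have h := hardy_sum_eq_zero hμ hf₀ hf₁ hg₀ hg₁ (a := 0) (a' := 1) (b := 0) (b' := 1)
    (by rw [← hP]; rfl) (by rw [← hP]; rfl) (by rw [← hP]; rfl)
  rw [← hP] at h
  norm_num [hardyStrategy] at h

/-- There exists a no-signaling binary strategy that admits an
active-common-randomness factorization (with the common randomness genuinely
depending on `(a,b)`) but no passive factorization. -/
theorem statement11 :
    ∃ P : Fin 2 → Fin 2 → Fin 2 → Fin 2 → ℝ,
      (∀ a b x y, 0 ≤ P a b x y) ∧
      (∀ a b : Fin 2, ∑ x, ∑ y, P a b x y = 1) ∧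
      (∀ a x b b' : Fin 2, ∑ y, P a b x y = ∑ y, P a b' x y) ∧
      (∀ b y a a' : Fin 2, ∑ x, P a b x y = ∑ x, P a' b x y) ∧
      (∃ (n : ℕ) (ν : Fin 2 → Fin 2 → Fin n → ℝ)
          (f : Fin 2 → Fin n → Fin 2 → ℝ) (g : Fin 2 → Fin n → Fin 2 → ℝ),
          (∀ a b w, 0 ≤ ν a b w) ∧ (∀ a b : Fin 2, ∑ w, ν a b w = 1) ∧
          (∀ a w x, 0 ≤ f a w x) ∧ (∀ a w, ∑ x, f a w x = 1) ∧
          (∀ b w y, 0 ≤ g b w y) ∧ (∀ b w, ∑ y, g b w y = 1) ∧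
          (∀ a b x y, P a b x y = ∑ w, ν a b w * f a w x * g b w y) ∧
          (∃ a b a' b' w, ν a b w ≠ ν a' b' w)) ∧
      ¬ ∃ (n : ℕ) (μ : Fin n → ℝ)
          (f : Fin 2 → Fin n → Fin 2 → ℝ) (g : Fin 2 → Fin n → Fin 2 → ℝ),
          (∀ w, 0 ≤ μ w) ∧ (∑ w, μ w = 1) ∧
          (∀ a w x, 0 ≤ f a w x) ∧ (∀ a w, ∑ x, f a w x = 1) ∧
          (∀ b w y, 0 ≤ g b w y) ∧ (∀ b w, ∑ y, g b w y = 1) ∧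
          (∀ a b x y, P a b x y = ∑ w, μ w * f a w x * g b w y) :=
  ⟨hardyStrategy, hardyStrategy_nonneg, hardyStrategy_sum, hardyStrategy_marginal_alice,
    hardyStrategy_marginal_bob, hardyStrategy_active_factorization,
    hardyStrategy_not_passive_factorization⟩
end
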